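/- arXiv:1708.05751 — 2 statements merged into one kernel-verified Lean document; each statement's English description precedes it below -/
import Mathlib

section
/- The quotient of a coding pair is extensional and well-founded: given a coding pair (M₀, R) with distinguished element a, the quotient structure (M̃₀, R̃) obtained by identifying elements whose restricted substructures are isomorphic satisfies: (1) R̃ is well-founded, and (2) distinct elements of M̃₀ that are R̃-below a common element have non-isomorphic restricted substructures, so the membership-like relation R̃ is extensional. -/
variable {α : Type*}

/-- `x` is connected to `a` by an `R`-chain of length `n` (the `R`-distance). -/
def ChainTo (R : α → α → Prop) (a : α) (n : ℕ) (x : α) : Prop :=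
  ∃ f : Fin (n + 1) → α, f 0 = x ∧ f (Fin.last n) = a ∧
    ∀ i : Fin n, R (f i.castSucc) (f i.succ)

/-- The `R`-transitive closure below `x` (including `x` itself): the domain of
the restricted substructure determined by `x`. -/
def below (R : α → α → Prop) (x : α) : Set α := {y | Relation.ReflTransGen R y x}

/-- The restricted substructures below `x` and below `y` are isomorphic
(by an `R`-preserving bijection sending `x` to `y`). -/
def SubIso (R : α → α → Prop) (x y : α) : Prop :=
  ∃ e : below R x ≃ below R y,
    (∀ u v : below R x, R u.1 v.1 ↔ R (e u).1 (e v).1) ∧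
    (e ⟨x, Relation.ReflTransGen.refl⟩).1 = y

/-- A coding pair: a class `M₀` (here: a type `α`) with a distinguished element
`a` and a binary relation `R` such that (i) every element has a unique finite
`R`-distance from `a`; (ii) distinct elements `R`-below a common element have
non-isomorphic restricted substructures; (iii) distinct elements at the same
`R`-distance from `a` have nothing `R`-below both; (iv) `R` is well-founded. -/
structure CodingPair (α : Type*) where
  R : α → α → Prop
  a : α
  dist_unique : ∀ x, ∃! n : ℕ, ChainTo R a n x
  noniso_below : ∀ x y z, y ≠ z → R y x → R z x → ¬ SubIso R y z
  levels_disjoint : ∀ y z, y ≠ z → (∃ n, ChainTo R a n y ∧ ChainTo R a n z) →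
    ∀ v, R v y → ¬ R v z
  wf : WellFounded R

/-- The quotient relation `R̃` on representatives: `x̃ R̃ ỹ` iff some `x₀`
isomorphic-below to `x̃` and `y₀` isomorphic-below to `ỹ` satisfy `x₀ R y₀`. -/
def quotRel (R : α → α → Prop) : α → α → Prop := fun xt yt =>
  ∃ x y, SubIso R x xt ∧ SubIso R y yt ∧ R x y

/-! Isomorphism of restricted substructures is an equivalence relation, and an isomorphism from
the structure below `y` onto the one below `w` sends each `R`-predecessor of `y` to an
`R`-predecessor of `w` with an isomorphic substructure. Hence `z R̃ v` iff `z` is isomorphic to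
an `R`-predecessor of `v`, and well-foundedness passes from `R` to `R̃`.

For extensionality, the distance from `a` makes `R` right-unique, so the structure below `u` is
a tree: `u` on top of the disjoint substructures below its `R`-predecessors. If `u` and `v` have
the same `R̃`-predecessors, condition (ii) turns this into a bijection between their
`R`-predecessors with isomorphic substructures; gluing these isomorphisms gives `u ≅ v`, and two
isomorphic representatives coincide. -/

open Relation Set

theorem mem_below_self {R : α → α → Prop} {x : α} : x ∈ below R x := ReflTransGen.refl

theorem below_subset_below {R : α → α → Prop} {x z : α} (hz : z ∈ below R x) :
    below R z ⊆ below R x :=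
  fun _ hp => ReflTransGen.trans hp hz

theorem eq_or_exists_rel_of_mem_below {R : α → α → Prop} {u w : α} (hw : w ∈ below R u) :
    w = u ∨ ∃ x, R x u ∧ w ∈ below R x := by
  rcases ReflTransGen.cases_tail hw with rfl | ⟨x, hwx, hxu⟩
  · exact Or.inl rfl
  · exact Or.inr ⟨x, hxu, hwx⟩

namespace SubIso

variable {R : α → α → Prop} {x y z : α}

theorem refl (R : α → α → Prop) (x : α) : SubIso R x x :=
  ⟨Equiv.refl _, fun _ _ => Iff.rfl, rfl⟩

theorem symm (h : SubIso R x y) : SubIso R y x := by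
  obtain ⟨e, he, hx⟩ := h
  refine ⟨e.symm, fun p q => by simpa using (he (e.symm p) (e.symm q)).symm, ?_⟩
  have hy : (⟨y, mem_below_self⟩ : below R y) = e ⟨x, mem_below_self⟩ := Subtype.ext hx.symm
  exact congrArg Subtype.val (e.symm_apply_eq.2 hy)

theorem trans (hxy : SubIso R x y) (hyz : SubIso R y z) : SubIso R x z := by
  obtain ⟨e₁, he₁, hx⟩ := hxy
  obtain ⟨e₂, he₂, hy⟩ := hyz
  refine ⟨e₁.trans e₂, fun p q => (he₁ p q).trans (he₂ _ _), ?_⟩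
  rw [Equiv.trans_apply, show e₁ ⟨x, _⟩ = ⟨y, mem_below_self⟩ from Subtype.ext hx, hy]

end SubIso

structure IsoOn (R : α → α → Prop) (g : α → α) (x y : α) : Prop where
  bijOn : BijOn g (below R x) (below R y)
  rel_iff : ∀ p ∈ below R x, ∀ q ∈ below R x, R p q ↔ R (g p) (g q)
  map_root : g x = y

namespace IsoOn

variable {R : α → α → Prop} {g : α → α} {x y z : α}

theorem mapsTo_below (h : IsoOn R g x y) (hz : z ∈ below R x) :
    MapsTo g (below R z) (below R (g z)) := by
  intro p hp
  induction hp using ReflTransGen.head_induction_on with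
  | refl => exact mem_below_self
  | head hpc hcz ih =>
    have hc : _ ∈ below R x := ReflTransGen.trans hcz hz
    exact ReflTransGen.head ((h.rel_iff _ (ReflTransGen.head hpc hc) _ hc).1 hpc) ih

theorem mem_below_of_map_mem_below (h : IsoOn R g x y) (hz : z ∈ below R x) {p : α}
    (hp : p ∈ below R x) (hgp : g p ∈ below R (g z)) : p ∈ below R z := by
  have hgz : g z ∈ below R y := h.bijOn.mapsTo hz
  suffices ∀ t ∈ below R (g z), ∀ p ∈ below R x, g p = t → p ∈ below R z from
    this _ hgp p hp rfl
  intro t ht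
  induction ht using ReflTransGen.head_induction_on with
  | refl => exact fun p hp hpz => h.bijOn.injOn hp hz hpz ▸ mem_below_self
  | head htc hcz ih =>
    rintro p hp rfl
    obtain ⟨p', hp', rfl⟩ := h.bijOn.surjOn (ReflTransGen.trans hcz hgz)
    exact ReflTransGen.head ((h.rel_iff p hp p' hp').2 htc) (ih p' hp' rfl)

theorem restrict (h : IsoOn R g x y) (hz : z ∈ below R x) : IsoOn R g z (g z) where
  bijOn := by
    refine ⟨h.mapsTo_below hz, h.bijOn.injOn.mono (below_subset_below hz), fun t ht => ?_⟩
    obtain ⟨p, hp, rfl⟩ := h.bijOn.surjOn (below_subset_below (h.bijOn.mapsTo hz) ht)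
    exact ⟨p, h.mem_below_of_map_mem_below hz hp ht, rfl⟩
  rel_iff p hp q hq := h.rel_iff p (below_subset_below hz hp) q (below_subset_below hz hq)
  map_root := rfl

end IsoOn

section quotRel

variable {R : α → α → Prop} {x y z v w : α}

theorem subIso_iff_exists_isoOn : SubIso R x y ↔ ∃ g, IsoOn R g x y := by
  classical
  constructor
  · rintro ⟨e, he, hx⟩
    let g : α → α := fun p => if hp : p ∈ below R x then (e ⟨p, hp⟩).1 else p
    have hg : ∀ p (hp : p ∈ below R x), g p = (e ⟨p, hp⟩).1 := fun p hp => dif_pos hp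
    refine ⟨g, ⟨⟨fun p hp => hg p hp ▸ (e _).2, fun p hp q hq hpq => ?_, fun t ht => ?_⟩,
      fun p hp q hq => by rw [hg p hp, hg q hq]; exact he ⟨p, hp⟩ ⟨q, hq⟩,
      hg x mem_below_self ▸ hx⟩⟩
    · rw [hg p hp, hg q hq] at hpq
      exact congrArg Subtype.val (e.injective (Subtype.ext hpq))
    · exact ⟨_, (e.symm ⟨t, ht⟩).2, by rw [hg _ (e.symm ⟨t, ht⟩).2]; simp⟩
  · rintro ⟨g, hg, hR, hx⟩
    exact ⟨hg.equiv g, fun p q => hR p p.2 q q.2, hx⟩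

theorem SubIso.exists_rel_subIso (h : SubIso R y w) (hx : R x y) :
    ∃ x', R x' w ∧ SubIso R x x' := by
  obtain ⟨g, hg⟩ := subIso_iff_exists_isoOn.1 h
  have hxy : x ∈ below R y := ReflTransGen.single hx
  refine ⟨g x, ?_, subIso_iff_exists_isoOn.2 ⟨g, hg.restrict hxy⟩⟩
  rw [← hg.map_root]
  exact (hg.rel_iff x hxy y mem_below_self).1 hx

theorem quotRel_iff : quotRel R z v ↔ ∃ x, R x v ∧ SubIso R z x := by
  constructor
  · rintro ⟨x, y, hxz, hyv, hxy⟩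
    obtain ⟨x', hx'v, hxx'⟩ := hyv.exists_rel_subIso hxy
    exact ⟨x', hx'v, hxz.symm.trans hxx'⟩
  · rintro ⟨x, hxv, hzx⟩
    exact ⟨x, v, hzx.symm, SubIso.refl R v, hxv⟩

theorem quotRel_of_rel (h : R x v) : quotRel R x v := quotRel_iff.2 ⟨x, h, SubIso.refl R x⟩

theorem quotRel_congr_left (h : SubIso R z y) : quotRel R z v ↔ quotRel R y v := by
  simp only [quotRel_iff]
  exact exists_congr fun x => and_congr_right fun _ => ⟨h.symm.trans, h.trans⟩

theorem wellFounded_quotRel (hR : WellFounded R) : WellFounded (quotRel R) := by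
  suffices ∀ w v, SubIso R w v → Acc (quotRel R) v from
    ⟨fun v => this v v (SubIso.refl R v)⟩
  intro w
  induction hR.apply w with
  | intro w _ ih =>
    refine fun v hwv => Acc.intro v fun z hz => ?_
    obtain ⟨x, hxv, hzx⟩ := quotRel_iff.1 hz
    obtain ⟨x', hx'w, hxx'⟩ := hwv.symm.exists_rel_subIso hxv
    exact ih x' hx'w z (hzx.trans hxx').symm

end quotRel

structure ChildMatching (R : α → α → Prop) (u v : α) where
  child : α → α
  iso : α → α → α
  bijOn : BijOn child {x | R x u} {y | R y v}
  isoOn : ∀ x, R x u → IsoOn R (iso x) x (child x)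

noncomputable def childAbove (R : α → α → Prop) (u w : α) : α :=
  haveI : Nonempty α := ⟨w⟩
  Classical.epsilon fun x => R x u ∧ w ∈ below R x

namespace ChildMatching

variable {R : α → α → Prop} {u v x : α} (M : ChildMatching R u v)

theorem rel_child (hx : R x u) : R (M.child x) v := M.bijOn.mapsTo hx

open Classical in
noncomputable def glue (w : α) : α := if w = u then v else M.iso (childAbove R u w) w

theorem glue_root : M.glue u = v := if_pos rfl

end ChildMatching

theorem ChainTo.of_rel {R : α → α → Prop} {a x y : α} {n : ℕ} (hxy : R x y)
    (h : ChainTo R a n y) : ChainTo R a (n + 1) x := by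
  obtain ⟨f, h0, hl, hs⟩ := h
  refine ⟨Fin.cons x f, rfl, by simpa [← Fin.succ_last] using hl, Fin.cases ?_ fun j => ?_⟩
  · simpa [h0] using hxy
  · simpa [← Fin.succ_castSucc] using hs j

namespace CodingPair

variable (C : CodingPair α) {u v w x x' y z p q : α}

noncomputable def dist (x : α) : ℕ := (C.dist_unique x).choose

theorem chainTo_dist (x : α) : ChainTo C.R C.a (C.dist x) x := (C.dist_unique x).choose_spec.1

theorem dist_eq_of_chainTo {n : ℕ} (h : ChainTo C.R C.a n x) : C.dist x = n :=
  ((C.dist_unique x).choose_spec.2 n h).symm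

theorem dist_of_rel (h : C.R x y) : C.dist x = C.dist y + 1 :=
  C.dist_eq_of_chainTo ((C.chainTo_dist y).of_rel h)

theorem dist_lt_of_transGen (h : TransGen C.R x y) : C.dist y < C.dist x := by
  induction h with
  | single h => simp [C.dist_of_rel h]
  | tail _ h ih => rw [C.dist_of_rel h] at ih; omega

theorem eq_of_mem_below_of_dist_le (h : x ∈ below C.R y) (hd : C.dist x ≤ C.dist y) :
    x = y := by
  rcases reflTransGen_iff_eq_or_transGen.1 h with rfl | h
  · rfl
  · exact absurd hd (C.dist_lt_of_transGen h).not_ge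

theorem not_rel_of_mem_below (h : y ∈ below C.R x) : ¬ C.R x y :=
  fun hxy => (C.dist_lt_of_transGen (TransGen.head' hxy h)).false

theorem rightUnique : Relator.RightUnique C.R := by
  intro w y z hy hz
  by_contra hne
  refine C.levels_disjoint y z hne ⟨C.dist y, C.chainTo_dist y, ?_⟩ w hy hz
  rw [show C.dist y = C.dist z by have := C.dist_of_rel hy; have := C.dist_of_rel hz; omega]
  exact C.chainTo_dist z

theorem eq_of_mem_below_of_dist_eq (hy : w ∈ below C.R y) (hz : w ∈ below C.R z)
    (hd : C.dist y = C.dist z) : y = z := by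
  rcases ReflTransGen.total_of_right_unique C.rightUnique hy hz with h | h
  · exact C.eq_of_mem_below_of_dist_le h hd.le
  · exact (C.eq_of_mem_below_of_dist_le h hd.ge).symm

theorem eq_of_mem_below_of_rel (hx : C.R x u) (hx' : C.R x' u) (hp : p ∈ below C.R x)
    (hq : q ∈ below C.R x') (hpq : p ∈ below C.R q) : x = x' :=
  C.eq_of_mem_below_of_dist_eq hp (below_subset_below hq hpq)
    (by rw [C.dist_of_rel hx, C.dist_of_rel hx'])

theorem rel_iff_eq_of_mem_below (hx : C.R x u) (hp : p ∈ below C.R x) : C.R p u ↔ p = x :=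
  ⟨fun hpu => C.eq_of_mem_below_of_rel hpu hx mem_below_self hp mem_below_self,
    fun h => h ▸ hx⟩

theorem eq_of_rel_of_subIso (hy : C.R y x) (hz : C.R z x) (h : SubIso C.R y z) : y = z :=
  by_contra fun hne => C.noniso_below x y z hne hy hz h

variable (M : ChildMatching C.R u v)

theorem childAbove_eq (hx : C.R x u) (hw : w ∈ below C.R x) : childAbove C.R u w = x := by
  have h := Classical.epsilon_spec (p := fun x => C.R x u ∧ w ∈ below C.R x) ⟨x, hx, hw⟩
  exact C.eq_of_mem_below_of_rel h.1 hx h.2 hw mem_below_self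

theorem glue_of_mem_below (hx : C.R x u) (hw : w ∈ below C.R x) : M.glue w = M.iso x w := by
  have hwu : w ≠ u := by
    rintro rfl
    exact C.not_rel_of_mem_below hw hx
  rw [ChildMatching.glue, if_neg hwu, C.childAbove_eq hx hw]

theorem glue_mem_below_child (hx : C.R x u) (hw : w ∈ below C.R x) :
    M.glue w ∈ below C.R (M.child x) := by
  rw [C.glue_of_mem_below M hx hw]
  exact (M.isoOn x hx).bijOn.mapsTo hw

theorem glue_ne_root (hx : C.R x u) (hw : w ∈ below C.R x) : M.glue w ≠ v := by
  intro h
  have hv := C.glue_mem_below_child M hx hw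
  rw [h] at hv
  exact C.not_rel_of_mem_below hv (M.rel_child hx)

theorem eq_of_glue_mem_below (hx : C.R x u) (hx' : C.R x' u) (hp : p ∈ below C.R x)
    (hq : q ∈ below C.R x') (h : M.glue p ∈ below C.R (M.glue q)) : x = x' :=
  M.bijOn.injOn hx hx' (C.eq_of_mem_below_of_rel (M.rel_child hx) (M.rel_child hx')
    (C.glue_mem_below_child M hx hp) (C.glue_mem_below_child M hx' hq) h)

theorem mapsTo_glue : MapsTo M.glue (below C.R u) (below C.R v) := by
  intro w hw
  rcases eq_or_exists_rel_of_mem_below hw with rfl | ⟨x, hx, hwx⟩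
  · rw [M.glue_root]
    exact mem_below_self
  · exact below_subset_below (ReflTransGen.single (M.rel_child hx))
      (C.glue_mem_below_child M hx hwx)

theorem injOn_glue : InjOn M.glue (below C.R u) := by
  intro p hp q hq hpq
  rcases eq_or_exists_rel_of_mem_below hp with rfl | ⟨x, hx, hpx⟩ <;>
    rcases eq_or_exists_rel_of_mem_below hq with rfl | ⟨x', hx', hqx'⟩
  · rfl
  · rw [M.glue_root] at hpq
    exact absurd hpq.symm (C.glue_ne_root M hx' hqx')
  · rw [M.glue_root] at hpq
    exact absurd hpq (C.glue_ne_root M hx hpx)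
  · obtain rfl := C.eq_of_glue_mem_below M hx hx' hpx hqx' (hpq ▸ mem_below_self)
    rw [C.glue_of_mem_below M hx hpx, C.glue_of_mem_below M hx hqx'] at hpq
    exact (M.isoOn x hx).bijOn.injOn hpx hqx' hpq

theorem surjOn_glue : SurjOn M.glue (below C.R u) (below C.R v) := by
  intro t ht
  rcases eq_or_exists_rel_of_mem_below ht with rfl | ⟨y, hy, hty⟩
  · exact ⟨u, mem_below_self, M.glue_root⟩
  · obtain ⟨x, hx, rfl⟩ := M.bijOn.surjOn hy
    obtain ⟨p, hp, rfl⟩ := (M.isoOn x hx).bijOn.surjOn hty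
    exact ⟨p, below_subset_below (ReflTransGen.single hx) hp, C.glue_of_mem_below M hx hp⟩

theorem rel_glue_iff_of_mem_below (hx : C.R x u) (hp : p ∈ below C.R x) :
    C.R (M.glue p) v ↔ C.R p u := by
  rw [C.rel_iff_eq_of_mem_below hx hp,
    C.rel_iff_eq_of_mem_below (M.rel_child hx) (C.glue_mem_below_child M hx hp),
    C.glue_of_mem_below M hx hp, ← (M.isoOn x hx).map_root]
  exact (M.isoOn x hx).bijOn.injOn.eq_iff hp mem_below_self

theorem glue_rel_glue_iff_of_mem_below (hx : C.R x u) (hx' : C.R x' u) (hp : p ∈ below C.R x)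
    (hq : q ∈ below C.R x') : C.R p q ↔ C.R (M.glue p) (M.glue q) := by
  by_cases hxx' : x = x'
  · subst hxx'
    rw [C.glue_of_mem_below M hx hp, C.glue_of_mem_below M hx hq]
    exact (M.isoOn x hx).rel_iff p hp q hq
  · exact iff_of_false
      (fun h => hxx' (C.eq_of_mem_below_of_rel hx hx' hp hq (ReflTransGen.single h)))
      (fun h => hxx' (C.eq_of_glue_mem_below M hx hx' hp hq (ReflTransGen.single h)))

theorem isoOn_glue : IsoOn C.R M.glue u v where
  bijOn := ⟨C.mapsTo_glue M, C.injOn_glue M, C.surjOn_glue M⟩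
  rel_iff p hp q hq := by
    rcases eq_or_exists_rel_of_mem_below hp with rfl | ⟨x, hx, hpx⟩
    · rw [M.glue_root]
      exact iff_of_false (C.not_rel_of_mem_below hq) (C.not_rel_of_mem_below (C.mapsTo_glue M hq))
    rcases eq_or_exists_rel_of_mem_below hq with rfl | ⟨x', hx', hqx'⟩
    · rw [M.glue_root, C.rel_glue_iff_of_mem_below M hx hpx]
    · exact C.glue_rel_glue_iff_of_mem_below M hx hx' hpx hqx'
  map_root := M.glue_root

theorem nonempty_childMatching (h : ∀ z, quotRel C.R z u ↔ quotRel C.R z v) :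
    Nonempty (ChildMatching C.R u v) := by
  have hiso : ∀ x, ∃ y g, C.R x u → C.R y v ∧ IsoOn C.R g x y := by
    intro x
    by_cases hx : C.R x u
    · obtain ⟨y, hy, hxy⟩ := quotRel_iff.1 ((h x).1 (quotRel_of_rel hx))
      obtain ⟨g, hg⟩ := subIso_iff_exists_isoOn.1 hxy
      exact ⟨y, g, fun _ => ⟨hy, hg⟩⟩
    · exact ⟨x, id, fun h => absurd h hx⟩
  choose φ g hφ using hiso
  have hsub : ∀ x, C.R x u → SubIso C.R x (φ x) :=
    fun x hx => subIso_iff_exists_isoOn.2 ⟨g x, (hφ x hx).2⟩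
  refine ⟨⟨φ, g, ⟨fun x hx => (hφ x hx).1, fun x hx x' hx' he => ?_, fun y hy => ?_⟩,
    fun x hx => (hφ x hx).2⟩⟩
  · exact C.eq_of_rel_of_subIso hx hx' ((hsub x hx).trans (he ▸ (hsub x' hx').symm))
  · obtain ⟨x, hx, hyx⟩ := quotRel_iff.1 ((h y).2 (quotRel_of_rel hy))
    exact ⟨x, hx, C.eq_of_rel_of_subIso (hφ x hx).1 hy ((hsub x hx).symm.trans hyx.symm)⟩

theorem subIso_of_forall_quotRel_iff (h : ∀ z, quotRel C.R z u ↔ quotRel C.R z v) :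
    SubIso C.R u v :=
  let ⟨M⟩ := C.nonempty_childMatching h
  subIso_iff_exists_isoOn.2 ⟨M.glue, C.isoOn_glue M⟩

end CodingPair

/-- The quotient of a coding pair is extensional and
well-founded: given a coding pair `(M₀, R)` and a choice `rep` of fixed
representatives of the isomorphism classes, the quotient structure
`(M̃₀, R̃) = (range rep, quotRel R)` satisfies: (1) `R̃` is well-founded;
(2) distinct elements of `M̃₀` that are `R̃`-below a common element have
non-isomorphic restricted substructures; and hence (3) `R̃` is extensional. -/
theorem quotient_codingPair_extensional_wf (C : CodingPair α) (rep : α → α)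
    (hrep_iso : ∀ x, SubIso C.R x (rep x))
    (hrep_eq : ∀ x y, SubIso C.R x y → rep x = rep y) :
    WellFounded (fun u v : Set.range rep => quotRel C.R u.1 v.1) ∧
    (∀ u v w : Set.range rep, u ≠ v →
      quotRel C.R u.1 w.1 → quotRel C.R v.1 w.1 → ¬ SubIso C.R u.1 v.1) ∧
    (∀ u v : Set.range rep,
      (∀ z : Set.range rep, quotRel C.R z.1 u.1 ↔ quotRel C.R z.1 v.1) → u = v) := by
  have eq_of_subIso : ∀ u v : Set.range rep, SubIso C.R u.1 v.1 → u = v := by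
    rintro ⟨_, x, rfl⟩ ⟨_, y, rfl⟩ h
    exact Subtype.ext (hrep_eq x y ((hrep_iso x).trans (h.trans (hrep_iso y).symm)))
  refine ⟨(wellFounded_quotRel C.wf).onFun, fun u v _ hne _ _ h => hne (eq_of_subIso u v h),
    fun u v huv => eq_of_subIso u v (C.subIso_of_forall_quotRel_iff fun z => ?_)⟩
  rw [quotRel_congr_left (hrep_iso z), quotRel_congr_left (hrep_iso z)]
  exact huv ⟨rep z, z, rfl⟩
end

section
/- If M is a countable transitive model of ZFC, then a theory T in the M-logic language (with constants for each element of M and a predicate for M) is consistent in M-logic if and only if T has a model which is an outer model of M, i.e., a (possibly countable) structure containing M with the constants interpreted standardly and M interpreted as M. (Barwise completeness for M-logic over a countable admissible set.) -/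
/-- First-order formulas of the language of set theory (one binary relation `∈`),
with free/bound variables among `Fin n`; `ex` quantifies the last variable,
`bex i` is the bounded quantifier `∃ x ∈ v i`. -/
inductive SForm : ℕ → Type
  | mem {n} (i j : Fin n) : SForm n
  | eq {n} (i j : Fin n) : SForm n
  | not {n} : SForm n → SForm n
  | and {n} : SForm n → SForm n → SForm n
  | ex {n} : SForm (n + 1) → SForm n
  | bex {n} (i : Fin n) : SForm (n + 1) → SForm n

/-- Tarskian satisfaction for `SForm` over a domain `D` of ZF-sets, with the
real membership relation. -/
def SForm.Realize (D : Set ZFSet) : ∀ {n}, SForm n → (Fin n → ZFSet) → Prop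
  | _, .mem i j, v => v i ∈ v j
  | _, .eq i j, v => v i = v j
  | _, .not φ, v => ¬ SForm.Realize D φ v
  | _, .and φ ψ, v => SForm.Realize D φ v ∧ SForm.Realize D ψ v
  | _, .ex φ, v => ∃ x ∈ D, SForm.Realize D φ (Fin.snoc v x)
  | _, .bex i φ, v => ∃ x ∈ v i, SForm.Realize D φ (Fin.snoc v x)

/-- `A ⊨ φ` for a sentence `φ`. -/
def ZModels (A : ZFSet) (φ : SForm 0) : Prop :=
  φ.Realize A.toSet (fun i => i.elim0)
/-- `M` is a transitive model of ZFC (axioms stated semantically, with the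
separation and replacement schemes ranging over all first-order formulas). -/
structure IsZFCModel (M : ZFSet) : Prop where
  transitive : M.IsTransitive
  empty_mem : ∅ ∈ M
  infinity : ZFSet.omega ∈ M
  pairing : ∀ x ∈ M, ∀ y ∈ M, ({x, y} : ZFSet) ∈ M
  union : ∀ x ∈ M, ZFSet.sUnion x ∈ M
  power : ∀ x ∈ M, ∃ p ∈ M, ∀ z ∈ M, z ⊆ x → z ∈ p
  separation : ∀ {n} (φ : SForm (n + 1)) (p : Fin n → ZFSet), (∀ i, p i ∈ M) →
    ∀ a ∈ M, ∃ b ∈ M, ∀ z, z ∈ b ↔ z ∈ a ∧ φ.Realize M.toSet (Fin.snoc p z)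
  replacement : ∀ {n} (φ : SForm (n + 2)) (p : Fin n → ZFSet), (∀ i, p i ∈ M) →
    ∀ a ∈ M, (∀ x ∈ a, ∃! y, y ∈ M ∧ φ.Realize M.toSet (Fin.snoc (Fin.snoc p x) y)) →
    ∃ b ∈ M, ∀ y, y ∈ b ↔ ∃ x ∈ a, φ.Realize M.toSet (Fin.snoc (Fin.snoc p x) y)
  choice : ∀ x ∈ M, (∀ y ∈ x, y ≠ ∅) →
    ∃ c ∈ M, ∀ y ∈ x, ∃! z, z ∈ y ∧ ZFSet.pair y z ∈ c

/-- `N` is an inner model of `M`: a transitive ZFC submodel of `M` containing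
all the ordinals of `M`. -/
def IsInnerModel (N M : ZFSet) : Prop :=
  N ⊆ M ∧ IsZFCModel N ∧ ∀ x ∈ M, x.IsOrdinal → x ∈ N

/-- For a transitive model of ZFC, satisfying `V = L` is equivalent to having
no proper inner model (since `L` is the least inner model); we use this
characterisation of `M ⊨ V = L`. -/
def SatisfiesVeqL (M : ZFSet) : Prop :=
  ∀ N, IsInnerModel N M → N = M
/-- Terms of the language of `M`-logic: variables and constants `x̄` for
each `x ∈ M`. -/
inductive MTerm (M : ZFSet) (n : ℕ) : Type 1
  | var (i : Fin n) : MTerm M n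
  | const (x : M.toSet) : MTerm M n

/-- Formulas of `M`-logic: `∈`, `=`, the predicate `M̄` (denoting `M`),
negation, conjunction, and universal quantification (binding the last
variable). -/
inductive MForm (M : ZFSet) : ℕ → Type 1
  | mem {n} (s t : MTerm M n) : MForm M n
  | eq {n} (s t : MTerm M n) : MForm M n
  | inM {n} (t : MTerm M n) : MForm M n
  | not {n} : MForm M n → MForm M n
  | and {n} : MForm M n → MForm M n → MForm M n
  | all {n} : MForm M (n + 1) → MForm M n

/-- Delete index `i ≠ k` from `Fin (n+1)`. -/
def finDrop {n : ℕ} (k i : Fin (n + 1)) (h : i ≠ k) : Fin n :=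
  if hlt : i.val < k.val then ⟨i.val, by have hk := k.isLt; omega⟩
  else ⟨i.val - 1, by
    have h' : i.val ≠ k.val := fun hh => h (Fin.ext hh)
    have hi := i.isLt; omega⟩

/-- Substitute the constant `c` for the variable `k` in a term. -/
def MTerm.substAt {M : ZFSet} {n : ℕ} (k : Fin (n + 1)) (c : M.toSet) :
    MTerm M (n + 1) → MTerm M n
  | .var i => if h : i = k then .const c else .var (finDrop k i h)
  | .const x => .const x

/-- Substitute the constant `c` for the variable `k` in a formula. -/
def MForm.substAt {M : ZFSet} : ∀ {n}, Fin (n + 1) → M.toSet → MForm M (n + 1) → MForm M n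
  | _, k, c, .mem s t => .mem (s.substAt k c) (t.substAt k c)
  | _, k, c, .eq s t => .eq (s.substAt k c) (t.substAt k c)
  | _, k, c, .inM t => .inM (t.substAt k c)
  | _, k, c, .not φ => .not (φ.substAt k c)
  | _, k, c, .and φ ψ => .and (φ.substAt k c) (ψ.substAt k c)
  | _, k, c, .all φ => .all (φ.substAt k.castSucc c)

/-- Material implication. -/
def impF {M : ZFSet} {n : ℕ} (φ ψ : MForm M n) : MForm M n := .not (.and φ (.not ψ))

/-- `∀ x ∈ ā, φ(x)`. -/
def bAllC {M : ZFSet} (a : M.toSet) (φ : MForm M 1) : MForm M 0 :=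
  .all (impF (.mem (.var 0) (.const a)) φ)

/-- `∀ x ∈ M̄, φ(x)`. -/
def vAllC {M : ZFSet} (φ : MForm M 1) : MForm M 0 :=
  .all (impF (.inM (.var 0)) φ)

/-- A structure for the language of `M`-logic. -/
structure MStruct (M : ZFSet) where
  Dom : Type 1
  mem : Dom → Dom → Prop
  inM : Dom → Prop
  const : M.toSet → Dom

/-- Evaluation of terms. -/
def MTerm.val {M : ZFSet} (S : MStruct M) {n : ℕ} (v : Fin n → S.Dom) :
    MTerm M n → S.Dom
  | .var i => v i
  | .const x => S.const x

/-- Tarskian satisfaction for `M`-logic formulas. -/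
def MForm.Realize {M : ZFSet} (S : MStruct M) : ∀ {n}, MForm M n → (Fin n → S.Dom) → Prop
  | _, .mem s t, v => S.mem (s.val S v) (t.val S v)
  | _, .eq s t, v => s.val S v = t.val S v
  | _, .inM t, v => S.inM (t.val S v)
  | _, .not φ, v => ¬ MForm.Realize S φ v
  | _, .and φ ψ, v => MForm.Realize S φ v ∧ MForm.Realize S ψ v
  | _, .all φ, v => ∀ d : S.Dom, MForm.Realize S φ (Fin.snoc v d)

/-- Logically valid sentences (the axioms of first-order logic). -/
def MValid (M : ZFSet) (φ : MForm M 0) : Prop :=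
  ∀ S : MStruct M, φ.Realize S (fun i => i.elim0)

/-- Atomic or negated atomic sentences (in the language with constants) that
are true in `V`. -/
def IsTrueAtom (M : ZFSet) (φ : MForm M 0) : Prop :=
  (∃ x y : M.toSet, x.1 ∈ y.1 ∧ φ = .mem (.const x) (.const y)) ∨
  (∃ x y : M.toSet, x.1 ∉ y.1 ∧ φ = .not (.mem (.const x) (.const y))) ∨
  (∃ x y : M.toSet, x = y ∧ φ = .eq (.const x) (.const y)) ∨
  (∃ x y : M.toSet, x ≠ y ∧ φ = .not (.eq (.const x) (.const y)))

/-- The provability relation of `M`-logic from a theory `T`: axioms are the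
sentences `x̄ ∈ M̄`, the true atomic and negated atomic facts about `M`, and
the axioms of first-order logic; rules are modus ponens, the Set-rule and
the `M`-rule (proofs are well-founded, possibly infinitely branching trees). -/
inductive MProv (M : ZFSet) (T : Set (MForm M 0)) : MForm M 0 → Prop
  | hyp {φ} : φ ∈ T → MProv M T φ
  | constInM (x : M.toSet) : MProv M T (.inM (.const x))
  | atom {φ} : IsTrueAtom M φ → MProv M T φ
  | logic {φ} : MValid M φ → MProv M T φ
  | mp {φ ψ} : MProv M T φ → MProv M T (impF φ ψ) → MProv M T ψ
  | setRule {a : ZFSet} (ha : a ∈ M) {φ : MForm M 1}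
      (h : ∀ b : M.toSet, b.1 ∈ a → MProv M T (φ.substAt 0 b)) :
      MProv M T (bAllC ⟨a, ha⟩ φ)
  | vRule {φ : MForm M 1} (h : ∀ b : M.toSet, MProv M T (φ.substAt 0 b)) :
      MProv M T (vAllC φ)

/-- `T` is consistent in `M`-logic. -/
def ConsistentML (M : ZFSet) (T : Set (MForm M 0)) : Prop :=
  ¬ ∃ φ : MForm M 0, MProv M T (.and φ (.not φ))

/-- `S` is an outer-model-style structure over `M`: constants are interpreted
standardly (injectively, respecting `∈`), `M̄` is interpreted as (the image of)
`M`, and `M` is a standard transitive part of `S`. -/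
def StandardOverM (M : ZFSet) (S : MStruct M) : Prop :=
  Function.Injective S.const ∧
  (∀ x y : M.toSet, S.mem (S.const x) (S.const y) ↔ x.1 ∈ y.1) ∧
  (∀ d, S.inM d ↔ ∃ x : M.toSet, d = S.const x) ∧
  (∀ d (y : M.toSet), S.mem d (S.const y) → ∃ x : M.toSet, d = S.const x)


/-!
Soundness is an induction on proofs. Completeness is a Henkin construction in which the Henkin
constants are the variables `x₀, x₁, …`: a condition is a formula `ψ(x₀, …, xₙ₋₁)`, consistent
when `T` does not prove `¬∃x̄ ψ`. As `M` is countable, a descending chain of consistent conditions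
can decide every formula, witness every false universal statement by a fresh variable, and equate
every term known to lie in `M̄`, or in some `ȳ`, with a constant `b̄`; the last step is where the
`M`-rule and the Set-rule enter, since otherwise they would prove the negation of the condition.
Constants and variables modulo forced equality then form a model of `T` over `M`.
-/

theorem Fin.snoc_eq_update {α : Sort*} (w : ℕ → α) (n : ℕ) (d : α) :
    (Fin.snoc (fun i : Fin n => w i) d : Fin (n + 1) → α) =
      fun i : Fin (n + 1) => Function.update w n d i := by
  funext i
  refine Fin.lastCases ?_ (fun i => ?_) i
  · simp
  · simp [Function.update_of_ne i.isLt.ne]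

namespace MTerm

variable {M : ZFSet}

def subst {m r : ℕ} (σ : Fin m → MTerm M r) : MTerm M m → MTerm M r
  | .var i => σ i
  | .const x => .const x

@[simp] theorem val_var {n : ℕ} (i : Fin n) (S : MStruct M) (v : Fin n → S.Dom) :
    (var i : MTerm M n).val S v = v i := rfl

@[simp] theorem val_const {n : ℕ} (x : M.toSet) (S : MStruct M) (v : Fin n → S.Dom) :
    (const x : MTerm M n).val S v = S.const x := rfl

@[simp] theorem val_subst {m r : ℕ} (σ : Fin m → MTerm M r) (t : MTerm M m) (S : MStruct M)
    (v : Fin r → S.Dom) : (t.subst σ).val S v = t.val S fun i => (σ i).val S v := by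
  cases t <;> rfl

end MTerm

namespace MForm

variable {M : ZFSet}

def subst : ∀ {m r : ℕ}, (Fin m → MTerm M r) → MForm M m → MForm M r
  | _, _, σ, .mem s t => .mem (s.subst σ) (t.subst σ)
  | _, _, σ, .eq s t => .eq (s.subst σ) (t.subst σ)
  | _, _, σ, .inM t => .inM (t.subst σ)
  | _, _, σ, .not φ => .not (φ.subst σ)
  | _, _, σ, .and φ ψ => .and (φ.subst σ) (ψ.subst σ)
  | _, r, σ, .all φ =>
      .all (φ.subst (Fin.snoc (fun i => (σ i).subst fun j => .var j.castSucc) (.var (Fin.last r))))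

theorem realize_subst : ∀ {m r : ℕ} (φ : MForm M m) (σ : Fin m → MTerm M r) (S : MStruct M)
    (v : Fin r → S.Dom), (φ.subst σ).Realize S v ↔ φ.Realize S fun i => (σ i).val S v
  | _, _, .mem s t, σ, S, v => by simp [subst, Realize]
  | _, _, .eq s t, σ, S, v => by simp [subst, Realize]
  | _, _, .inM t, σ, S, v => by simp [subst, Realize]
  | _, _, .not φ, σ, S, v => by simp [subst, Realize, realize_subst φ]
  | _, _, .and φ ψ, σ, S, v => by simp [subst, Realize, realize_subst φ, realize_subst ψ]
  | _, r, .all φ, σ, S, v => by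
      simp only [subst, Realize, realize_subst φ]
      refine forall_congr' fun d => iff_of_eq (congrArg _ (funext fun i => ?_))
      refine Fin.lastCases ?_ (fun i => ?_) i <;> simp

def exF {n : ℕ} (φ : MForm M (n + 1)) : MForm M n := .not (.all (.not φ))

def exClosure : ∀ {n : ℕ}, MForm M n → MForm M 0
  | 0, φ => φ
  | _ + 1, φ => exClosure (exF φ)

/-- The existential closure of all variables but `x₀`. -/
def exClosure₁ : ∀ {n : ℕ}, MForm M (n + 1) → MForm M 1
  | 0, φ => φ
  | _ + 1, φ => exClosure₁ (exF φ)

theorem realize_exF {n : ℕ} (φ : MForm M (n + 1)) (S : MStruct M) (v : Fin n → S.Dom) :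
    (exF φ).Realize S v ↔ ∃ d, φ.Realize S (Fin.snoc v d) := by
  simp only [exF, Realize, not_forall, not_not]

theorem realize_exClosure {S : MStruct M} [Nonempty S.Dom] :
    ∀ {n : ℕ} (φ : MForm M n) (v : Fin 0 → S.Dom),
      (exClosure φ).Realize S v ↔ ∃ w : ℕ → S.Dom, φ.Realize S fun i => w i
  | 0, φ, v => by
      have hv : ∀ w : ℕ → S.Dom, (fun i : Fin 0 => w i) = v := fun _ => Subsingleton.elim _ _
      simp only [exClosure, hv]
      exact ⟨fun h => ⟨fun _ => Classical.arbitrary _, h⟩, fun ⟨_, h⟩ => h⟩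
  | n + 1, φ, v => by
      rw [show exClosure φ = exClosure (exF φ) from rfl, realize_exClosure (exF φ) v]
      simp only [realize_exF, Fin.snoc_eq_update]
      exact ⟨fun ⟨_, _, h⟩ => ⟨_, h⟩, fun ⟨w, h⟩ => ⟨w, w n, by rwa [Function.update_eq_self]⟩⟩

theorem realize_exClosure₁ {S : MStruct M} :
    ∀ {n : ℕ} (φ : MForm M (n + 1)) (w : ℕ → S.Dom),
      (exClosure₁ φ).Realize S (fun i => w i) ↔
        ∃ w' : ℕ → S.Dom, w' 0 = w 0 ∧ φ.Realize S fun i => w' i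
  | 0, φ, w => by
      show φ.Realize S _ ↔ _
      refine ⟨fun h => ⟨w, rfl, h⟩, fun ⟨w', h0, h⟩ => ?_⟩
      convert h using 2 with i
      rw [Fin.fin_one_eq_zero i]
      exact h0.symm
  | n + 1, φ, w => by
      rw [show exClosure₁ φ = exClosure₁ (exF φ) from rfl, realize_exClosure₁ (exF φ) w]
      simp only [realize_exF, Fin.snoc_eq_update]
      refine ⟨fun ⟨w', h0, d, h⟩ => ⟨_, ?_, h⟩, fun ⟨w', h0, h⟩ => ⟨w', h0, w' (n + 1), ?_⟩⟩
      · rwa [Function.update_of_ne (Nat.succ_ne_zero n).symm]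
      · rwa [Function.update_eq_self]

end MForm

/-- The valuation read by `substAt k c`. -/
def finInsert {n : ℕ} {α : Sort*} (k : Fin (n + 1)) (x : α) (v : Fin n → α) : Fin (n + 1) → α :=
  fun i => if h : i = k then x else v (finDrop k i h)

theorem finDrop_castSucc {n : ℕ} (k i : Fin (n + 1)) (h : i ≠ k)
    (h' : i.castSucc ≠ k.castSucc) :
    finDrop k.castSucc i.castSucc h' = (finDrop k i h).castSucc := by
  apply Fin.ext
  simp only [finDrop, Fin.val_castSucc]
  split <;> rfl

theorem finDrop_last {n : ℕ} (k : Fin (n + 1)) (h : Fin.last (n + 1) ≠ k.castSucc) :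
    finDrop k.castSucc (Fin.last (n + 1)) h = Fin.last n := by
  apply Fin.ext
  have hk := k.isLt
  simp only [finDrop, Fin.val_castSucc, Fin.val_last]
  rw [dif_neg (by omega)]
  simp

theorem finInsert_castSucc_snoc {n : ℕ} {α : Sort*} (k : Fin (n + 1)) (x : α) (v : Fin n → α)
    (d : α) : finInsert k.castSucc x (Fin.snoc v d) = Fin.snoc (finInsert k x v) d := by
  funext j
  refine Fin.lastCases ?_ (fun i => ?_) j
  · have h : Fin.last (n + 1) ≠ k.castSucc := (Fin.castSucc_lt_last k).ne'
    rw [Fin.snoc_last, finInsert, dif_neg h, finDrop_last k h, Fin.snoc_last]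
  · rw [Fin.snoc_castSucc]
    by_cases hik : i = k
    · subst hik
      simp [finInsert]
    · have h' : i.castSucc ≠ k.castSucc := fun h => hik (Fin.castSucc_injective _ h)
      rw [finInsert, dif_neg h', finDrop_castSucc k i hik h', Fin.snoc_castSucc, finInsert,
        dif_neg hik]

theorem MTerm.val_substAt {M : ZFSet} {S : MStruct M} {n : ℕ} (t : MTerm M (n + 1))
    (k : Fin (n + 1)) (c : M.toSet) (v : Fin n → S.Dom) :
    (t.substAt k c).val S v = t.val S (finInsert k (S.const c) v) := by
  cases t with
  | var i => by_cases h : i = k <;> simp [MTerm.substAt, finInsert, h]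
  | const x => rfl

namespace MForm

variable {M : ZFSet}

theorem realize_substAt {S : MStruct M} :
    ∀ {n : ℕ} (φ : MForm M (n + 1)) (k : Fin (n + 1)) (c : M.toSet) (v : Fin n → S.Dom),
      (φ.substAt k c).Realize S v ↔ φ.Realize S (finInsert k (S.const c) v)
  | _, .mem s t, k, c, v => by simp [substAt, Realize, MTerm.val_substAt]
  | _, .eq s t, k, c, v => by simp [substAt, Realize, MTerm.val_substAt]
  | _, .inM t, k, c, v => by simp [substAt, Realize, MTerm.val_substAt]
  | _, .not φ, k, c, v => by simp [substAt, Realize, realize_substAt φ]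
  | _, .and φ ψ, k, c, v => by simp [substAt, Realize, realize_substAt φ, realize_substAt ψ]
  | _, .all φ, k, c, v => by
      simp only [substAt, Realize]
      exact forall_congr' fun d => by rw [realize_substAt φ, finInsert_castSucc_snoc]

theorem realize_substAt_zero {S : MStruct M} (φ : MForm M 1) (c : M.toSet) (v : Fin 0 → S.Dom) :
    (φ.substAt 0 c).Realize S v ↔ φ.Realize S fun _ => S.const c := by
  rw [realize_substAt]
  exact iff_of_eq (congrArg _ (funext fun i => dif_pos (Fin.fin_one_eq_zero i)))

end MForm

/-- The range of an ω-rule: `M̄` (`none`, the `M`-rule) or a constant `ȳ` (`some y`, the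
Set-rule). -/
abbrev MRange (M : ZFSet) : Type 1 := Option M.toSet

namespace MRange

variable {M : ZFSet}

def Contains : MRange M → M.toSet → Prop
  | none, _ => True
  | some y, b => b.1 ∈ y.1

def Interp (S : MStruct M) : MRange M → S.Dom → Prop
  | none, d => S.inM d
  | some y, d => S.mem d (S.const y)

def form {n : ℕ} : MRange M → MTerm M n → MForm M n
  | none, t => .inM t
  | some y, t => .mem t (.const y)

theorem realize_form {S : MStruct M} (g : MRange M) {n : ℕ} (t : MTerm M n)
    (v : Fin n → S.Dom) : (g.form t).Realize S v ↔ g.Interp S (t.val S v) := by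
  cases g <;> rfl

theorem realize_all_form {S : MStruct M} (g : MRange M) (φ : MForm M 1) (v : Fin 0 → S.Dom) :
    (MForm.all (impF (g.form (.var 0)) φ)).Realize S v ↔
      ∀ d, g.Interp S d → φ.Realize S fun _ => d := by
  have hv : ∀ d, (Fin.snoc v d : Fin 1 → S.Dom) = fun _ => d :=
    fun d => funext fun i => by rw [Fin.fin_one_eq_zero i]; rfl
  cases g <;> simp [impF, form, Interp, MForm.Realize, hv]

end MRange

section Soundness

variable {M : ZFSet} {T : Set (MForm M 0)}

theorem MProv.range_rule {g : MRange M} {φ : MForm M 1}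
    (h : ∀ b, g.Contains b → MProv M T (φ.substAt 0 b)) :
    MProv M T (.all (impF (g.form (.var 0)) φ)) := by
  cases g with
  | none => exact .vRule fun b => h b trivial
  | some y => exact .setRule y.2 h

theorem StandardOverM.interp_iff {S : MStruct M} (hS : StandardOverM M S) (g : MRange M)
    (d : S.Dom) : g.Interp S d ↔ ∃ b, g.Contains b ∧ d = S.const b := by
  obtain ⟨-, hmem, hinM, htrans⟩ := hS
  cases g with
  | none => simpa [MRange.Interp, MRange.Contains] using hinM d
  | some y =>
      refine ⟨fun hd => ?_, fun ⟨b, hb, hd⟩ => hd ▸ (hmem b y).2 hb⟩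
      obtain ⟨b, rfl⟩ := htrans d y hd
      exact ⟨b, (hmem b y).1 hd, rfl⟩

theorem MProv.realize {S : MStruct M} (hS : StandardOverM M S)
    (hT : ∀ φ ∈ T, φ.Realize S Fin.elim0) {φ : MForm M 0} (h : MProv M T φ) :
    φ.Realize S Fin.elim0 := by
  have range_sound : ∀ (g : MRange M) (φ : MForm M 1),
      (∀ b, g.Contains b → (φ.substAt 0 b).Realize S Fin.elim0) →
        (MForm.all (impF (g.form (.var 0)) φ)).Realize S Fin.elim0 := by
    refine fun g φ ih => (MRange.realize_all_form g φ _).2 fun d hd => ?_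
    obtain ⟨b, hb, rfl⟩ := (hS.interp_iff g d).1 hd
    exact (MForm.realize_substAt_zero φ b _).1 (ih b hb)
  induction h with
  | hyp h => exact hT _ h
  | constInM x => exact (hS.2.2.1 _).2 ⟨x, rfl⟩
  | atom h =>
      rcases h with ⟨x, y, h, rfl⟩ | ⟨x, y, h, rfl⟩ | ⟨x, y, h, rfl⟩ | ⟨x, y, h, rfl⟩
      · exact (hS.2.1 x y).2 h
      · exact mt (hS.2.1 x y).1 h
      · exact congrArg S.const h
      · exact mt (@hS.1 x y) h
  | logic h => exact h S
  | mp _ _ ih₁ ih₂ => exact not_not.1 fun h => ih₂ ⟨ih₁, h⟩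
  | @setRule a ha φ _ ih => exact range_sound (some ⟨a, ha⟩) φ ih
  | vRule _ ih => exact range_sound none _ fun b _ => ih b

theorem consistentML_of_model {S : MStruct M} (hS : StandardOverM M S)
    (hT : ∀ φ ∈ T, φ.Realize S Fin.elim0) : ConsistentML M T :=
  fun ⟨_, h⟩ => (h.realize hS hT).2 (h.realize hS hT).1

end Soundness

section Provability

variable {M : ZFSet} {T : Set (MForm M 0)}

theorem MProv.of_valid_imp {φ ψ : MForm M 0} (h : MProv M T φ)
    (hv : ∀ S : MStruct M, φ.Realize S Fin.elim0 → ψ.Realize S Fin.elim0) : MProv M T ψ :=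
  h.mp (.logic fun S ⟨h₁, h₂⟩ => h₂ (hv S h₁))

theorem MProv.and_intro {φ ψ : MForm M 0} (h₁ : MProv M T φ) (h₂ : MProv M T ψ) :
    MProv M T (φ.and ψ) :=
  h₂.mp (h₁.mp (.logic fun _ ⟨h₁, h₂⟩ => h₂ fun h₃ => h₃.2 ⟨h₁, h₃.1⟩))

end Provability

/-- Henkin terms: the constants `x̄` and the witness variables `xⱼ`. -/
abbrev HTerm (M : ZFSet) : Type 1 := M.toSet ⊕ ℕ

namespace HTerm

variable {M : ZFSet}

def eval (S : MStruct M) (w : ℕ → S.Dom) : HTerm M → S.Dom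
  | .inl x => S.const x
  | .inr j => w j

def bound : HTerm M → ℕ
  | .inl _ => 0
  | .inr j => j + 1

def toMTerm {r : ℕ} : (a : HTerm M) → a.bound ≤ r → MTerm M r
  | .inl x, _ => .const x
  | .inr j, h => .var ⟨j, h⟩

def shift : HTerm M → HTerm M
  | .inl x => .inl x
  | .inr j => .inr (j + 1)

def ofMTerm {m : ℕ} (σ : Fin m → HTerm M) : MTerm M m → HTerm M
  | .var i => σ i
  | .const x => .inl x

variable {S : MStruct M} (w : ℕ → S.Dom)

@[simp] theorem eval_inr (j : ℕ) : HTerm.eval S w (.inr j : HTerm M) = w j := rfl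

@[simp] theorem val_toMTerm (a : HTerm M) {r : ℕ} (h : a.bound ≤ r) :
    (a.toMTerm h).val S (fun i => w i) = a.eval S w := by
  cases a <;> rfl

theorem eval_update (a : HTerm M) {r : ℕ} (h : a.bound ≤ r) (d : S.Dom) :
    a.eval S (Function.update w r d) = a.eval S w := by
  cases a with
  | inl x => rfl
  | inr j => exact Function.update_of_ne (Nat.ne_of_lt h) _ _

@[simp] theorem eval_shift (a : HTerm M) : a.shift.eval S w = a.eval S fun j => w (j + 1) := by
  cases a <;> rfl

theorem eval_ofMTerm {m : ℕ} (σ : Fin m → HTerm M) (t : MTerm M m) :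
    (ofMTerm σ t).eval S w = t.val S fun i => (σ i).eval S w := by
  cases t <;> rfl

theorem eval_snoc {m : ℕ} (σ : Fin m → HTerm M) (a : HTerm M) :
    (fun i => (Fin.snoc σ a : Fin (m + 1) → HTerm M) i |>.eval S w) =
      Fin.snoc (fun i => (σ i).eval S w) (a.eval S w) :=
  Fin.comp_snoc (eval S w) σ a

end HTerm

instance MStruct.nonempty_dom {M : ZFSet} [Nonempty M.toSet] (S : MStruct M) : Nonempty S.Dom :=
  ⟨S.const (Classical.arbitrary _)⟩

/-- A condition: a formula in the witness variables `x₀, …, xₙ₋₁`. -/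
abbrev Condition (M : ZFSet) : Type 1 := Σ n, MForm M n

abbrev Assertion (M : ZFSet) := (S : MStruct M) → (ℕ → S.Dom) → Prop

namespace Condition

variable {M : ZFSet} {T : Set (MForm M 0)}

def Holds (p : Condition M) : Assertion M := fun S w => p.2.Realize S fun i => w i

def Entails (p : Condition M) (P : Assertion M) : Prop := ∀ S w, p.Holds S w → P S w

def lift (p : Condition M) {r : ℕ} (h : p.1 ≤ r) : MForm M r :=
  p.2.subst fun i => .var (Fin.castLE h i)

protected def and (p q : Condition M) : Condition M :=
  ⟨max p.1 q.1, (p.lift (le_max_left _ _)).and (q.lift (le_max_right _ _))⟩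

protected def not (p : Condition M) : Condition M := ⟨p.1, p.2.not⟩

def shift (p : Condition M) : Condition M := ⟨p.1 + 1, p.2.subst fun i => .var i.succ⟩

def ofForm {m : ℕ} (φ : MForm M m) (σ : Fin m → HTerm M) : Condition M :=
  ⟨Finset.univ.sup fun i => (σ i).bound,
    φ.subst fun i => (σ i).toMTerm (Finset.le_sup (f := fun i => (σ i).bound) (Finset.mem_univ i))⟩

def ofEq (a b : HTerm M) : Condition M :=
  ⟨max a.bound b.bound, .eq (a.toMTerm (le_max_left _ _)) (b.toMTerm (le_max_right _ _))⟩

def ofRange (g : MRange M) (a : HTerm M) : Condition M := ⟨a.bound, g.form (a.toMTerm le_rfl)⟩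

def top : Condition M := ⟨0, .all (.eq (.var 0) (.var 0))⟩

variable {S : MStruct M} (w : ℕ → S.Dom)

theorem realize_lift (p : Condition M) {r : ℕ} (h : p.1 ≤ r) :
    (p.lift h).Realize S (fun i => w i) ↔ p.Holds S w := by
  simp [lift, MForm.realize_subst, Holds]

@[simp] theorem holds_and (p q : Condition M) :
    (p.and q).Holds S w ↔ p.Holds S w ∧ q.Holds S w :=
  and_congr (realize_lift w p _) (realize_lift w q _)

@[simp] theorem holds_not (p : Condition M) : p.not.Holds S w ↔ ¬ p.Holds S w := Iff.rfl

@[simp] theorem holds_shift (p : Condition M) :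
    p.shift.Holds S w ↔ p.Holds S fun j => w (j + 1) := by
  simp [shift, Holds, MForm.realize_subst]

@[simp] theorem holds_ofForm {m : ℕ} (φ : MForm M m) (σ : Fin m → HTerm M) :
    (ofForm φ σ).Holds S w ↔ φ.Realize S fun i => (σ i).eval S w := by
  simp [ofForm, Holds, MForm.realize_subst]

@[simp] theorem holds_ofEq (a b : HTerm M) :
    (ofEq a b).Holds S w ↔ a.eval S w = b.eval S w := by
  simp [ofEq, Holds, MForm.Realize]

@[simp] theorem holds_ofRange (g : MRange M) (a : HTerm M) :
    (ofRange g a).Holds S w ↔ g.Interp S (a.eval S w) := by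
  simp [ofRange, Holds, MRange.realize_form]

theorem holds_update (p : Condition M) {r : ℕ} (h : p.1 ≤ r) (d : S.Dom) :
    p.Holds S (Function.update w r d) ↔ p.Holds S w := by
  have hw : (fun i : Fin p.1 => Function.update w r d i) = fun i : Fin p.1 => w i :=
    funext fun i => Function.update_of_ne (i.isLt.trans_le h).ne _ _
  simp only [Holds, hw]

def Consistent (p : Condition M) (T : Set (MForm M 0)) : Prop :=
  ¬ MProv M T (.not (MForm.exClosure p.2))

theorem Entails.trans {p q : Condition M} {P : Assertion M} (hpq : p.Entails q.Holds)
    (hq : q.Entails P) : p.Entails P :=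
  fun S w hw => hq S w (hpq S w hw)

theorem entails_and_left (p q : Condition M) : (p.and q).Entails p.Holds :=
  fun _ w hw => ((holds_and w p q).1 hw).1

theorem entails_and_right (p q : Condition M) : (p.and q).Entails q.Holds :=
  fun _ w hw => ((holds_and w p q).1 hw).2

theorem consistent_top (hT : ConsistentML M T) : (top : Condition M).Consistent T :=
  fun h => hT ⟨top.2, MProv.and_intro (.logic fun _ _ => rfl) h⟩

variable [Nonempty M.toSet]

theorem realize_exClosure (p : Condition M) (v : Fin 0 → S.Dom) :
    (MForm.exClosure p.2).Realize S v ↔ ∃ w, p.Holds S w :=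
  MForm.realize_exClosure p.2 v

theorem Consistent.mono {p q : Condition M} (hp : p.Consistent T)
    (h : ∀ S w, p.Holds S w → ∃ w', q.Holds S w') : q.Consistent T :=
  fun hq => hp <| hq.of_valid_imp fun S hq' hp' =>
    hq' ((realize_exClosure q _).2 (Exists.elim ((realize_exClosure p _).1 hp') (h S)))

theorem Consistent.exists_holds_of_prov {p : Condition M} (hp : p.Consistent T) {φ : MForm M 0}
    (hφ : MProv M T φ) : ∃ S w, p.Holds S w ∧ φ.Realize S Fin.elim0 := by
  by_contra! h
  exact hp <| hφ.of_valid_imp fun S hS hp' =>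
    Exists.elim ((realize_exClosure p _).1 hp') fun w hw => h S w hw hS

theorem Consistent.exists_holds {p : Condition M} (hp : p.Consistent T) : ∃ S w, p.Holds S w := by
  by_contra! h
  exact hp <| .logic fun S hp' => Exists.elim ((realize_exClosure p _).1 hp') (h S)

theorem Consistent.and_or_and_not {p : Condition M} (hp : p.Consistent T) (q : Condition M) :
    (p.and q).Consistent T ∨ (p.and q.not).Consistent T := by
  by_contra! h
  obtain ⟨h₁, h₂⟩ : MProv M T _ ∧ MProv M T _ := ⟨not_not.1 h.1, not_not.1 h.2⟩
  refine hp <| (h₁.and_intro h₂).of_valid_imp fun S ⟨hn₁, hn₂⟩ hp' => ?_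
  obtain ⟨w, hw⟩ := (realize_exClosure p _).1 hp'
  by_cases hq : q.Holds S w
  · exact hn₁ ((realize_exClosure _ _).2 ⟨w, (holds_and w p q).2 ⟨hw, hq⟩⟩)
  · exact hn₂ ((realize_exClosure _ _).2 ⟨w, (holds_and w p q.not).2 ⟨hw, hq⟩⟩)

theorem Consistent.exists_eq_const {p : Condition M} (hp : p.Consistent T) {g : MRange M}
    {a : HTerm M} (hg : p.Entails fun S w => g.Interp S (a.eval S w)) :
    ∃ b, g.Contains b ∧ (p.and (ofEq a (.inl b))).Consistent T := by
  by_contra! hne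
  let φ : MForm M 1 :=
    .not (MForm.exClosure₁ ((p.shift.and (ofEq a.shift (.inr 0))).lift (Nat.le_succ _)))
  have hφ : ∀ (S : MStruct M) d,
      φ.Realize S (fun _ => d) ↔ ¬ ∃ w, p.Holds S w ∧ a.eval S w = d := by
    refine fun S d => not_congr ((MForm.realize_exClosure₁ _ fun _ => d).trans ?_)
    simp only [realize_lift, holds_and, holds_shift, holds_ofEq, HTerm.eval_shift]
    refine ⟨fun ⟨w', hw'0, hw', ha⟩ => ⟨_, hw', ha.trans hw'0⟩, fun ⟨w, hw, ha⟩ => ?_⟩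
    exact ⟨fun j => if j = 0 then d else w (j - 1), by simpa using ⟨hw, ha⟩⟩
  -- the refutations of all `p ∧ a = b̄` combine, by the ω-rule of `g`, into a refutation of `p`
  have hsub : ∀ b, g.Contains b → MProv M T (φ.substAt 0 b) := fun b hb =>
    (not_not.1 (hne b hb)).of_valid_imp fun S h =>
      (MForm.realize_substAt_zero φ b _).2 <| (hφ S _).2 fun ⟨w, hw, hab⟩ =>
        h ((realize_exClosure _ _).2 ⟨w, (holds_and w _ _).2 ⟨hw, (holds_ofEq w _ _).2 hab⟩⟩)
  refine hp <| (MProv.range_rule hsub).of_valid_imp fun S h hp' => ?_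
  obtain ⟨w, hw⟩ := (realize_exClosure p _).1 hp'
  exact (hφ S _).1 ((MRange.realize_all_form g φ _).1 h _ (hg S w hw)) ⟨w, hw, rfl⟩

end Condition

section Countability

variable {M : ZFSet}

def MForm.code (c : ∀ {n : ℕ}, MTerm M n → ℕ) : ∀ {n : ℕ}, MForm M n → ℕ
  | _, .mem s t => Nat.pair 0 (Nat.pair (c s) (c t))
  | _, .eq s t => Nat.pair 1 (Nat.pair (c s) (c t))
  | _, .inM t => Nat.pair 2 (c t)
  | _, .not φ => Nat.pair 3 (code c φ)
  | _, .and φ ψ => Nat.pair 4 (Nat.pair (code c φ) (code c ψ))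
  | _, .all φ => Nat.pair 5 (code c φ)

theorem MForm.code_injective {c : ∀ {n : ℕ}, MTerm M n → ℕ}
    (hc : ∀ n, Function.Injective (c (n := n))) {n : ℕ} :
    Function.Injective (code c : MForm M n → ℕ) := by
  intro φ
  induction φ with
  | mem s t =>
      intro ψ h
      cases ψ <;> simp [code, Nat.pair_eq_pair] at h
      rw [hc _ h.1, hc _ h.2]
  | eq s t =>
      intro ψ h
      cases ψ <;> simp [code, Nat.pair_eq_pair] at h
      rw [hc _ h.1, hc _ h.2]
  | inM t =>
      intro ψ h
      cases ψ <;> simp [code, Nat.pair_eq_pair] at h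
      rw [hc _ h]
  | not φ ih =>
      intro ψ h
      cases ψ <;> simp [code, Nat.pair_eq_pair] at h
      rw [ih h]
  | and φ₁ φ₂ ih₁ ih₂ =>
      intro ψ h
      cases ψ <;> simp [code, Nat.pair_eq_pair] at h
      rw [ih₁ h.1, ih₂ h.2]
  | all φ ih =>
      intro ψ h
      cases ψ <;> simp [code, Nat.pair_eq_pair] at h
      rw [ih h]

variable [Countable M.toSet]

instance MTerm.countable {n : ℕ} : Countable (MTerm M n) := by
  let f : MTerm M n → Fin n ⊕ M.toSet
    | .var i => .inl i
    | .const x => .inr x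
  refine Function.Injective.countable (f := f) ?_
  rintro (_ | _) (_ | _) h <;> cases h <;> rfl

instance MForm.countable {n : ℕ} : Countable (MForm M n) := by
  choose c hc using fun n => exists_injective_nat (MTerm M n)
  exact (MForm.code_injective (c := fun {n} => c n) hc).countable

end Countability

inductive HenkinTask (M : ZFSet) : Type 1
  | decide (p : Condition M)
  | witnessAll {m : ℕ} (θ : MForm M (m + 1)) (σ : Fin m → HTerm M)
  | witnessRange (g : MRange M) (a : HTerm M)

namespace HenkinTask

variable {M : ZFSet}

open Condition

instance [Countable M.toSet] : Countable (HenkinTask M) := by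
  let f : HenkinTask M →
      Condition M ⊕ (Σ m, MForm M (m + 1) × (Fin m → HTerm M)) ⊕ (MRange M × HTerm M)
    | decide p => .inl p
    | witnessAll θ σ => .inr (.inl ⟨_, θ, σ⟩)
    | witnessRange g a => .inr (.inr (g, a))
  refine Function.Injective.countable (f := f) ?_
  rintro (_ | _ | _) (_ | _ | _) h <;> cases h <;> rfl

instance : Nonempty (HenkinTask M) := ⟨decide top⟩

def Done (q : Condition M) : HenkinTask M → Prop
  | decide p => q.Entails p.Holds ∨ q.Entails p.not.Holds
  | witnessAll θ σ =>
      q.Entails (ofForm (.all θ) σ).Holds ∨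
        ∃ j, q.Entails (ofForm θ.not (Fin.snoc σ (.inr j))).Holds
  | witnessRange g a =>
      q.Entails (ofRange g a).not.Holds ∨ ∃ b, g.Contains b ∧ q.Entails (ofEq a (.inl b)).Holds

end HenkinTask

section Tasks

open Condition

variable {M : ZFSet} {T : Set (MForm M 0)} [Nonempty M.toSet]

theorem Condition.Consistent.exists_done {p : Condition M} (hp : p.Consistent T) :
    ∀ τ : HenkinTask M, ∃ q : Condition M, q.Consistent T ∧ q.Entails p.Holds ∧ τ.Done q
  | .decide c => (hp.and_or_and_not c).elim
      (fun h => ⟨_, h, entails_and_left _ _, .inl (entails_and_right _ _)⟩)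
      (fun h => ⟨_, h, entails_and_left _ _, .inr (entails_and_right _ _)⟩)
  | .witnessAll θ σ => by
      rcases hp.and_or_and_not (ofForm (.all θ) σ) with h | h
      · exact ⟨_, h, entails_and_left _ _, .inl (entails_and_right _ _)⟩
      -- a fresh variable `x_r` witnesses the failure of `∀ θ`
      set r := max p.1 (ofForm (.all θ) σ).1
      refine ⟨_, h.mono fun S w hw => ?_, entails_and_left _ _, .inr ⟨r, entails_and_right _ _⟩⟩
      obtain ⟨hpw, hθ⟩ := (holds_and w _ _).1 hw
      simp only [holds_not, holds_ofForm, MForm.Realize, not_forall] at hθ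
      obtain ⟨d, hd⟩ := hθ
      have hσ : (fun i => (σ i).eval S (Function.update w r d)) = fun i => (σ i).eval S w :=
        funext fun i => HTerm.eval_update w _
          ((Finset.le_sup (f := fun i => (σ i).bound) (Finset.mem_univ i)).trans
            (le_max_right _ _)) d
      refine ⟨Function.update w r d, (holds_and _ _ _).2
        ⟨(holds_update w p (le_max_left _ _) d).2 hpw, ?_⟩⟩
      simpa [MForm.Realize, HTerm.eval_snoc, hσ] using hd
  | .witnessRange g a => by
      rcases hp.and_or_and_not (ofRange g a) with h | h
      · obtain ⟨b, hb, hq⟩ := h.exists_eq_const fun S w hw =>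
          (holds_ofRange w g a).1 (entails_and_right _ _ S w hw)
        exact ⟨_, hq, (entails_and_left _ _).trans (entails_and_left _ _),
          .inr ⟨b, hb, entails_and_right _ _⟩⟩
      · exact ⟨_, h, entails_and_left _ _, .inl (entails_and_right _ _)⟩

end Tasks

structure HenkinChain {M : ZFSet} (T : Set (MForm M 0)) : Type 1 where
  cond : ℕ → Condition M
  task : ℕ → HenkinTask M
  task_surjective : Function.Surjective task
  consistent : ∀ k, (cond k).Consistent T
  entails_succ : ∀ k, (cond (k + 1)).Entails (cond k).Holds
  done : ∀ k, (task k).Done (cond (k + 1))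

namespace HenkinChain

open Condition

variable {M : ZFSet} {T : Set (MForm M 0)}

theorem nonempty [Nonempty M.toSet] [Countable M.toSet] (hT : ConsistentML M T) :
    Nonempty (HenkinChain T) := by
  obtain ⟨task, htask⟩ := exists_surjective_nat (HenkinTask M)
  choose next hnext using fun k (p : {p : Condition M // p.Consistent T}) =>
    p.2.exists_done (task k)
  let cond : ℕ → {p : Condition M // p.Consistent T} := fun k =>
    Nat.rec ⟨top, consistent_top hT⟩ (fun k p => ⟨next k p, (hnext k p).1⟩) k
  exact ⟨⟨fun k => (cond k).1, task, htask, fun k => (cond k).2,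
    fun k => (hnext k (cond k)).2.1, fun k => (hnext k (cond k)).2.2⟩⟩

variable {C : HenkinChain T}

def Forced (C : HenkinChain T) (P : Assertion M) : Prop := ∃ k, (C.cond k).Entails P

theorem entails_of_le {k l : ℕ} (h : k ≤ l) : (C.cond l).Entails (C.cond k).Holds := by
  induction l, h using Nat.le_induction with
  | base => exact fun _ _ => id
  | succ l _ ih => exact (C.entails_succ l).trans ih

theorem exists_done (C : HenkinChain T) (τ : HenkinTask M) : ∃ k, τ.Done (C.cond (k + 1)) :=
  let ⟨k, hk⟩ := C.task_surjective τ
  ⟨k, hk ▸ C.done k⟩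

theorem forced_of_forall {P : Assertion M} (h : ∀ S w, P S w) : C.Forced P :=
  ⟨0, fun S w _ => h S w⟩

theorem Forced.mono {P Q : Assertion M} (hP : C.Forced P) (h : ∀ S w, P S w → Q S w) :
    C.Forced Q :=
  let ⟨k, hk⟩ := hP
  ⟨k, fun S w hw => h S w (hk S w hw)⟩

theorem Forced.and {P Q : Assertion M} (hP : C.Forced P) (hQ : C.Forced Q) :
    C.Forced fun S w => P S w ∧ Q S w :=
  let ⟨k, hk⟩ := hP
  let ⟨l, hl⟩ := hQ
  ⟨max k l, fun S w hw => ⟨hk S w (entails_of_le (le_max_left k l) S w hw),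
    hl S w (entails_of_le (le_max_right k l) S w hw)⟩⟩

theorem forced_or_forced_not (C : HenkinChain T) (p : Condition M) :
    C.Forced p.Holds ∨ C.Forced p.not.Holds :=
  let ⟨k, hk⟩ := C.exists_done (.decide p)
  Or.imp (⟨k + 1, ·⟩) (⟨k + 1, ·⟩) hk

def setoid (C : HenkinChain T) : Setoid (HTerm M) where
  r a b := C.Forced fun S w => a.eval S w = b.eval S w
  iseqv :=
    { refl := fun _ => forced_of_forall fun _ _ => rfl
      symm := fun h => h.mono fun _ _ => Eq.symm
      trans := fun h₁ h₂ => (h₁.and h₂).mono fun _ _ h => h.1.trans h.2 }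

def termModel (C : HenkinChain T) : MStruct M where
  Dom := Quotient C.setoid
  mem := Quotient.lift₂ (fun a b => C.Forced fun S w => S.mem (a.eval S w) (b.eval S w))
    fun _ _ _ _ ha hb => propext
      ⟨fun h => ((h.and ha).and hb).mono fun _ _ ⟨⟨h, ha⟩, hb⟩ => ha ▸ hb ▸ h,
        fun h => ((h.and ha).and hb).mono fun _ _ ⟨⟨h, ha⟩, hb⟩ => ha ▸ hb ▸ h⟩
  inM := Quotient.lift (fun a => C.Forced fun S w => S.inM (a.eval S w))
    fun _ _ ha => propext
      ⟨fun h => (h.and ha).mono fun _ _ ⟨h, ha⟩ => ha ▸ h,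
        fun h => (h.and ha).mono fun _ _ ⟨h, ha⟩ => ha ▸ h⟩
  const x := Quotient.mk _ (.inl x)

theorem val_termModel (C : HenkinChain T) {m : ℕ} (σ : Fin m → HTerm M) (t : MTerm M m) :
    t.val C.termModel (fun i => Quotient.mk C.setoid (σ i)) =
      Quotient.mk C.setoid (HTerm.ofMTerm σ t) := by
  cases t <;> rfl

variable [Nonempty M.toSet]

theorem Forced.not_forced_not {P : Assertion M} (hP : C.Forced P) :
    ¬ C.Forced fun S w => ¬ P S w := fun hnP =>
  let ⟨k, hk⟩ := hP.and hnP
  let ⟨S, w, hw⟩ := (C.consistent k).exists_holds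
  (hk S w hw).2 (hk S w hw).1

theorem forced_not_iff {P : Assertion M} {p : Condition M} (hp : ∀ S w, P S w ↔ p.Holds S w) :
    C.Forced (fun S w => ¬ P S w) ↔ ¬ C.Forced P := by
  refine ⟨fun h hP => hP.not_forced_not h, fun h => ?_⟩
  rcases C.forced_or_forced_not p with hp' | hp'
  · exact absurd (hp'.mono fun S w => (hp S w).2) h
  · exact hp'.mono fun S w hn hP => hn ((hp S w).1 hP)

theorem forced_of_prov {φ : MForm M 0} (h : MProv M T φ) :
    C.Forced fun S _ => φ.Realize S Fin.elim0 := by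
  have hv : ∀ (S : MStruct M) (w : ℕ → S.Dom), (fun i : Fin 0 => w i) = Fin.elim0 :=
    fun _ _ => Subsingleton.elim _ _
  rcases C.forced_or_forced_not ⟨0, φ⟩ with hφ | ⟨k, hk⟩
  · exact hφ.mono fun S w hw => hv S w ▸ hw
  · obtain ⟨S, w, hw, hS⟩ := (C.consistent k).exists_holds_of_prov h
    exact absurd ((hv S w).symm ▸ hS) (hk S w hw)

theorem Forced.exists_witness {m : ℕ} {θ : MForm M (m + 1)} {σ : Fin m → HTerm M}
    (h : C.Forced fun S w => ¬ ∀ d, θ.Realize S (Fin.snoc (fun i => (σ i).eval S w) d)) :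
    ∃ j, C.Forced fun S w => ¬ θ.Realize S (Fin.snoc (fun i => (σ i).eval S w) (w j)) := by
  obtain ⟨k, hk⟩ := C.exists_done (.witnessAll θ σ)
  rcases hk with hk | ⟨j, hj⟩
  · exact absurd h (Forced.not_forced_not ⟨k + 1, fun S w hw => (holds_ofForm w _ σ).1 (hk S w hw)⟩)
  · refine ⟨j, k + 1, fun S w hw => ?_⟩
    simpa [MForm.Realize, HTerm.eval_snoc] using hj S w hw

theorem Forced.exists_eq_const {g : MRange M} {a : HTerm M}
    (h : C.Forced fun S w => g.Interp S (a.eval S w)) :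
    ∃ b, g.Contains b ∧ C.Forced fun S w => a.eval S w = S.const b := by
  obtain ⟨k, hk⟩ := C.exists_done (.witnessRange g a)
  rcases hk with hk | ⟨b, hb, hab⟩
  · exact absurd ⟨k + 1, hk⟩ (h.mono fun S w => (holds_ofRange w g a).2).not_forced_not
  · exact ⟨b, hb, k + 1, fun S w hw => (holds_ofEq w _ _).1 (hab S w hw)⟩

theorem realize_termModel (C : HenkinChain T) : ∀ {m : ℕ} (φ : MForm M m) (σ : Fin m → HTerm M),
    φ.Realize C.termModel (fun i => Quotient.mk C.setoid (σ i)) ↔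
      C.Forced fun S w => φ.Realize S fun i => (σ i).eval S w
  | _, .mem s t, σ => by
      simp only [MForm.Realize, val_termModel, ← HTerm.eval_ofMTerm]
      rfl
  | _, .eq s t, σ => by
      simp only [MForm.Realize, val_termModel, ← HTerm.eval_ofMTerm]
      exact Quotient.eq
  | _, .inM t, σ => by
      simp only [MForm.Realize, val_termModel, ← HTerm.eval_ofMTerm]
      rfl
  | _, .not φ, σ =>
      (not_congr (realize_termModel C φ σ)).trans
        (forced_not_iff fun S w => (holds_ofForm w φ σ).symm).symm
  | _, .and φ ψ, σ =>
      (and_congr (realize_termModel C φ σ) (realize_termModel C ψ σ)).trans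
        ⟨fun ⟨h₁, h₂⟩ => h₁.and h₂,
          fun h => ⟨h.mono fun _ _ => And.left, h.mono fun _ _ => And.right⟩⟩
  | m, .all θ, σ => by
      have hsnoc : ∀ a, (Fin.snoc (fun i => Quotient.mk C.setoid (σ i)) (Quotient.mk C.setoid a) :
          Fin (m + 1) → C.termModel.Dom) =
            fun i => Quotient.mk C.setoid ((Fin.snoc σ a : Fin (m + 1) → HTerm M) i) :=
        fun a => (Fin.comp_snoc _ σ a).symm
      show (∀ d : Quotient C.setoid, _) ↔ _
      simp only [Quotient.forall, hsnoc, realize_termModel C θ, HTerm.eval_snoc]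
      refine ⟨fun h => by_contra fun hn => ?_, fun h a => h.mono fun _ _ h => h _⟩
      -- a forced counterexample to `∀ θ` has a witness variable `x_j`, contradicting `θ(x_j)`
      obtain ⟨j, hj⟩ := Forced.exists_witness
        ((forced_not_iff fun S w => (holds_ofForm w (.all θ) σ).symm).2 hn)
      exact (h (.inr j)).not_forced_not hj

theorem termModel_standardOverM (C : HenkinChain T) : StandardOverM M C.termModel := by
  refine ⟨fun x y h => ?_, fun x y => ⟨fun h => ?_, fun h => ?_⟩, fun d => ?_, fun d y => ?_⟩
  · by_contra hxy
    exact (Quotient.exact h).not_forced_not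
      (forced_of_prov (.atom (.inr (.inr (.inr ⟨x, y, hxy, rfl⟩)))))
  · by_contra hxy
    exact (show C.Forced _ from h).not_forced_not
      (forced_of_prov (.atom (.inr (.inl ⟨x, y, hxy, rfl⟩))))
  · exact forced_of_prov (.atom (.inl ⟨x, y, h, rfl⟩))
  · induction d using Quotient.inductionOn with
    | h a =>
      refine ⟨fun h => ?_, fun ⟨x, hx⟩ => hx ▸ forced_of_prov (.constInM x)⟩
      obtain ⟨b, -, hb⟩ := Forced.exists_eq_const (g := none) (a := a) h
      exact ⟨b, Quotient.sound hb⟩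
  · induction d using Quotient.inductionOn with
    | h a =>
      intro h
      obtain ⟨b, -, hb⟩ := Forced.exists_eq_const (g := some y) (a := a) h
      exact ⟨b, Quotient.sound hb⟩

theorem termModel_realize_of_mem (C : HenkinChain T) {φ : MForm M 0} (hφ : φ ∈ T) :
    φ.Realize C.termModel Fin.elim0 := by
  have h := (C.realize_termModel φ Fin.elim0).2
    ((forced_of_prov (.hyp hφ)).mono fun S w h => by convert h)
  have hv : (fun i : Fin 0 => Quotient.mk C.setoid (Fin.elim0 i : HTerm M)) =
      (Fin.elim0 : Fin 0 → C.termModel.Dom) := Subsingleton.elim _ _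
  rwa [hv] at h

end HenkinChain

theorem exists_standardOverM_of_consistentML {M : ZFSet} [Countable M.toSet] [Nonempty M.toSet]
    {T : Set (MForm M 0)} (hT : ConsistentML M T) :
    ∃ S : MStruct M, StandardOverM M S ∧ ∀ φ ∈ T, φ.Realize S Fin.elim0 :=
  let ⟨C⟩ := HenkinChain.nonempty hT
  ⟨C.termModel, C.termModel_standardOverM, fun _ => C.termModel_realize_of_mem⟩

/-- **Barwise completeness for `M`-logic.** If `M` is a
countable transitive model of ZFC, then a theory `T` in the `M`-logic language
is consistent in `M`-logic if and only if `T` has a model which is an outer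
model of `M`: a structure containing `M` with the constants interpreted
standardly and `M̄` interpreted as `M`. -/
theorem mlogic_consistent_iff_outer_model (M : ZFSet) (hM : IsZFCModel M)
    (hcount : M.toSet.Countable) (T : Set (MForm M 0)) :
    ConsistentML M T ↔
      ∃ S : MStruct M, StandardOverM M S ∧
        ∀ φ ∈ T, φ.Realize S (fun i => i.elim0) := by
  have : Countable M.toSet := hcount.to_subtype
  have : Nonempty M.toSet := ⟨⟨∅, hM.empty_mem⟩⟩
  exact ⟨exists_standardOverM_of_consistentML, fun ⟨_, hS, hT⟩ => consistentML_of_model hS hT⟩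
end
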